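/- Let I be a nonempty finite set of coordinate indices of ℝⁿ, let s ∈ ℝⁿ, let ε_i > 0 for each i ∈ I, and let t ∈ (0, 1]. Then the superlevel set {x ∈ ℝⁿ : b(x; I, s, ε) ≥ t} equals {x ∈ ℝⁿ : Σ_{i∈I} |x_i − s_i|/ε_i ≤ 1 − t}, and this set is closed and convex. -/
import Mathlib


/-- ReLU function: `relu v = max v 0`. -/
noncomputable def relu (v : ℝ) : ℝ := max v 0

/-- Basic bar function `φ(x; i, s, ε)` on `ℝⁿ`. -/
noncomputable def phi {n : ℕ} (x : Fin n → ℝ) (i : Fin n) (s ε : ℝ) : ℝ :=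
  (1 / ε) * (relu ((x i - s) + ε) - 2 * relu (x i - s) + relu ((x i - s) - ε))

/-- Bar function `b(x; I, s, ε) = ReLU(Σ_{i∈I} φ(x; i, s_i, ε_i) − #I + 1)`. -/
noncomputable def bar {n : ℕ} (x : Fin n → ℝ) (I : Finset (Fin n)) (s ε : Fin n → ℝ) : ℝ :=
  relu (∑ i ∈ I, phi x i (s i) (ε i) - (I.card : ℝ) + 1)

lemma relu_hat (u ε : ℝ) (hε : 0 < ε) :
    relu (u + ε) - 2 * relu u + relu (u - ε) = max (ε - |u|) 0 := by
  unfold relu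
  rcases abs_cases u with ⟨h1, h2⟩ | ⟨h1, h2⟩ <;> rw [h1] <;>
    rw [max_def, max_def, max_def, max_def] <;> split_ifs <;> linarith

lemma phi_eq {n : ℕ} (x : Fin n → ℝ) (i : Fin n) (s ε : ℝ) (hε : 0 < ε) :
    phi x i s ε = max (1 - |x i - s| / ε) 0 := by
  unfold phi
  rw [relu_hat _ _ hε]
  rcases le_total (ε - |x i - s|) 0 with h | h
  · rw [max_eq_right h, max_eq_right (by rw [sub_nonpos, le_div_iff₀ hε]; linarith)]
    ring
  · rw [max_eq_left h, max_eq_left (by rw [sub_nonneg, div_le_one hε]; linarith)]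
    field_simp

/-- For `t ∈ (0, 1]`, the superlevel set `{x | b(x; I, s, ε) ≥ t}` equals
`{x | Σ_{i∈I} |x_i - s_i| / ε_i ≤ 1 - t}`, and this set is closed and convex. -/
theorem bar_superlevel_set {n : ℕ} (I : Finset (Fin n)) (hI : I.Nonempty)
    (s ε : Fin n → ℝ) (hε : ∀ i ∈ I, 0 < ε i) (t : ℝ) (ht0 : 0 < t) (ht1 : t ≤ 1) :
    {x : Fin n → ℝ | t ≤ bar x I s ε} =
      {x : Fin n → ℝ | ∑ i ∈ I, |x i - s i| / ε i ≤ 1 - t} ∧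
    IsClosed {x : Fin n → ℝ | ∑ i ∈ I, |x i - s i| / ε i ≤ 1 - t} ∧
    Convex ℝ {x : Fin n → ℝ | ∑ i ∈ I, |x i - s i| / ε i ≤ 1 - t} := by
  refine ⟨?_, ?_, ?_⟩
  · ext x
    simp only [Set.mem_setOf_eq, bar, relu]
    have hd : ∀ i ∈ I, (0:ℝ) ≤ |x i - s i| / ε i := fun i hi =>
      div_nonneg (abs_nonneg _) (hε i hi).le
    constructor
    · intro h
      -- t ≤ max v 0 with t > 0 gives t ≤ v
      have hv : t ≤ ∑ i ∈ I, phi x i (s i) (ε i) - (I.card : ℝ) + 1 := by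
        rcases le_max_iff.mp h with h' | h'
        · exact h'
        · linarith
      -- each phi is positive, hence equals 1 - d_i
      have hphi : ∀ j ∈ I, phi x j (s j) (ε j) = 1 - |x j - s j| / ε j := by
        intro j hj
        have hle : ∀ i ∈ I, phi x i (s i) (ε i) ≤ 1 := by
          intro i hi
          rw [phi_eq x i (s i) (ε i) (hε i hi)]
          exact max_le (by linarith [hd i hi]) (by norm_num)
        have hsum : ∑ i ∈ I.erase j, phi x i (s i) (ε i) ≤ ((I.erase j).card : ℝ) := by
          calc ∑ i ∈ I.erase j, phi x i (s i) (ε i)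
              ≤ ∑ i ∈ I.erase j, (1:ℝ) :=
                Finset.sum_le_sum fun i hi => hle i (Finset.mem_of_mem_erase hi)
            _ = ((I.erase j).card : ℝ) := by simp
        have hcard : ((I.erase j).card : ℝ) = (I.card : ℝ) - 1 := by
          rw [Finset.card_erase_of_mem hj]
          have : 1 ≤ I.card := Finset.card_pos.mpr ⟨j, hj⟩
          push_cast [this]; ring
        have hsplit : ∑ i ∈ I, phi x i (s i) (ε i)
            = phi x j (s j) (ε j) + ∑ i ∈ I.erase j, phi x i (s i) (ε i) :=
          (Finset.add_sum_erase I _ hj).symm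
        have hpos : 0 < phi x j (s j) (ε j) := by
          rw [hsplit] at hv; rw [hcard] at hsum; linarith
        rw [phi_eq x j (s j) (ε j) (hε j hj)] at hpos ⊢
        rcases le_total (1 - |x j - s j| / ε j) 0 with h' | h'
        · rw [max_eq_right h'] at hpos; linarith
        · exact max_eq_left h'
      have : ∑ i ∈ I, phi x i (s i) (ε i)
          = (I.card : ℝ) - ∑ i ∈ I, |x i - s i| / ε i := by
        rw [Finset.sum_congr rfl hphi, Finset.sum_sub_distrib]
        simp
      linarith [hv, this.symm ▸ hv]
    · intro h
      have hphi : ∀ j ∈ I, phi x j (s j) (ε j) = 1 - |x j - s j| / ε j := by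
        intro j hj
        rw [phi_eq x j (s j) (ε j) (hε j hj)]
        apply max_eq_left
        have : |x j - s j| / ε j ≤ ∑ i ∈ I, |x i - s i| / ε i :=
          Finset.single_le_sum hd hj
        linarith
      have hsum : ∑ i ∈ I, phi x i (s i) (ε i)
          = (I.card : ℝ) - ∑ i ∈ I, |x i - s i| / ε i := by
        rw [Finset.sum_congr rfl hphi, Finset.sum_sub_distrib]
        simp
      apply le_max_of_le_left
      rw [hsum]; linarith
  · apply isClosed_le _ continuous_const
    exact continuous_finset_sum _ fun i _ =>
      (((continuous_apply i).sub continuous_const).abs).div_const _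
  · intro p hp q hq a b ha hb hab
    simp only [Set.mem_setOf_eq] at hp hq ⊢
    have key : ∀ i : Fin n, |(a • p + b • q) i - s i| ≤ a * |p i - s i| + b * |q i - s i| := by
      intro i
      have h1 : (a • p + b • q) i - s i = a * (p i - s i) + b * (q i - s i) := by
        simp only [Pi.add_apply, Pi.smul_apply, smul_eq_mul]
        linear_combination (s i) * hab
      rw [h1]
      calc |a * (p i - s i) + b * (q i - s i)|
          ≤ |a * (p i - s i)| + |b * (q i - s i)| := abs_add_le _ _
        _ = a * |p i - s i| + b * |q i - s i| := by
            rw [abs_mul, abs_mul, abs_of_nonneg ha, abs_of_nonneg hb]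
    calc ∑ i ∈ I, |(a • p + b • q) i - s i| / ε i
        ≤ ∑ i ∈ I, (a * |p i - s i| + b * |q i - s i|) / ε i := by
          apply Finset.sum_le_sum
          intro i hi
          exact div_le_div_of_nonneg_right (key i) (hε i hi).le |>.trans_eq rfl
      _ = a * ∑ i ∈ I, |p i - s i| / ε i + b * ∑ i ∈ I, |q i - s i| / ε i := by
          rw [Finset.mul_sum, Finset.mul_sum, ← Finset.sum_add_distrib]
          exact Finset.sum_congr rfl fun i _ => by ring
      _ ≤ a * (1 - t) + b * (1 - t) :=
          add_le_add (mul_le_mul_of_nonneg_left hp ha) (mul_le_mul_of_nonneg_left hq hb)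
      _ = 1 - t := by rw [← add_mul, hab, one_mul]
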